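/- arXiv:1912.08451 — 2 statements merged into one kernel-verified Lean document; each statement's English description precedes it below -/
import Mathlib

section
/- Let G be a finite group, H a normal subgroup of index 2, and ω ∈ G ∖ H. Let (π, V) be an irreducible complex representation of H such that the conjugate representation π^ω (given by π^ω(h) = π(ω h ω⁻¹)) is isomorphic to π. Then π extends to a representation of G on V, there are exactly two such extensions π₊ and π₋, and they are related by π₋(g) = χ(g) π₊(g) where χ is the unique nontrivial character of G/H (inflated to G); in particular π₋(ω) = −π₊(ω). -/
open scoped Classical

variable {G : Type*} [Group G] {V : Type*} [AddCommGroup V] [Module ℂ V]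

/-- The conjugate representation `π^ω` of a representation `π` of a normal subgroup `H`,
given by `π^ω(h) = π(ω h ω⁻¹)`. -/
def conjRep {H : Subgroup G} (hN : H.Normal) (ω : G) (π : Representation ℂ H V) :
    Representation ℂ H V :=
  haveI := hN
  π.comp (MulAut.conjNormal ω).toMonoidHom

/-- Isomorphism of representations. -/
def RepIso {H : Type*} [Group H] {V₁ V₂ : Type*} [AddCommGroup V₁] [Module ℂ V₁]
    [AddCommGroup V₂] [Module ℂ V₂]
    (π₁ : Representation ℂ H V₁) (π₂ : Representation ℂ H V₂) : Prop :=
  ∃ e : V₁ ≃ₗ[ℂ] V₂, ∀ (h : H) (v : V₁), e (π₁ h v) = π₂ h (e v)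

/-- Irreducibility of a representation: the space is nonzero and has no proper nonzero
invariant subspace. -/
def IsIrred {H : Type*} [Group H] {W : Type*} [AddCommGroup W] [Module ℂ W]
    (π : Representation ℂ H W) : Prop :=
  Nontrivial W ∧
    ∀ U : Submodule ℂ W, (∀ (h : H) (v : W), v ∈ U → π h v ∈ U) → U = ⊥ ∨ U = ⊤

/-!
Choose an isomorphism `E : π ≅ π^ω`, i.e. `E π(h) E⁻¹ = π(ω h ω⁻¹)`. Then `π(ω²)⁻¹ E²` commutes
with `π`, so by Schur it is a nonzero scalar `c`, and `A = c^{-1/2} E` satisfies the two relations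
that `π₊(ω)` must satisfy: `A π(h) A⁻¹ = π(ω h ω⁻¹)` and `A² = π(ω²)`. Since `G = H ∪ ωH`, these
relations are exactly what is needed to extend `π` by `π₊(ω h) = A π(h)`. Conversely, for two
extensions `ρ₁, ρ₂` the operator `ρ₂(ω) ρ₁(ω)⁻¹` commutes with `π`, hence is a scalar `t`, and
comparing `ρ₁(ω²) = ρ₂(ω²)` gives `t² = 1`; an extension is determined by its value at `ω`.
-/

theorem IsIrred.exists_eq_smul_one {H : Type*} [Group H] [FiniteDimensional ℂ V]
    {π : Representation ℂ H V} (hπ : IsIrred π) {T : Module.End ℂ V}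
    (hT : ∀ h, T * π h = π h * T) : ∃ c : ℂ, T = c • 1 := by
  have := hπ.1
  obtain ⟨c, hc⟩ := Module.End.exists_eigenvalue T
  have hinv : ∀ (h : H) (v : V), v ∈ T.eigenspace c → π h v ∈ T.eigenspace c := by
    intro h v hv
    rw [Module.End.mem_eigenspace_iff] at hv ⊢
    rw [← Module.End.mul_apply, hT, Module.End.mul_apply, hv, map_smul]
  rcases hπ.2 _ hinv with hbot | htop
  · exact absurd hbot (Module.End.hasEigenvalue_iff.mp hc)
  · refine ⟨c, LinearMap.ext fun v => ?_⟩
    exact Module.End.mem_eigenspace_iff.mp (htop ▸ Submodule.mem_top)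

theorem Representation.apply_ne_neg {M k W : Type*} [Monoid M] [Field k] [CharZero k]
    [AddCommGroup W] [Module k W] [Nontrivial W] (ρ : Representation k M W) (g : M)
    (hg : IsUnit g) : ρ g ≠ -ρ g := by
  intro h
  have h2 : (2 : k) • ρ g = 0 := by
    rw [two_smul]
    nth_rewrite 1 [h]
    exact neg_add_cancel _
  exact (hg.map ρ).ne_zero ((smul_eq_zero.mp h2).resolve_left two_ne_zero)

theorem MonoidHom.eq_of_eqOn_subgroup_of_index_two {M : Type*} [Monoid M] {H : Subgroup G}
    (hidx : H.index = 2) {ω : G} (hω : ω ∉ H) {f₁ f₂ : G →* M} (hH : Set.EqOn f₁ f₂ H)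
    (hfω : f₁ ω = f₂ ω) : f₁ = f₂ := by
  ext g
  by_cases hg : g ∈ H
  · exact hH hg
  · have hωg : ω⁻¹ * g ∈ H := by simp [Subgroup.mul_mem_iff_of_index_two hidx, hω, hg]
    rw [show g = ω * (ω⁻¹ * g) by group, map_mul f₁, map_mul f₂, hfω, hH hωg]

noncomputable def Subgroup.signOfIndexTwo {R : Type*} [Ring R] {H : Subgroup G}
    (hidx : H.index = 2) : G →* R where
  toFun g := if g ∈ H then 1 else -1
  map_one' := by simp
  map_mul' a b := by
    by_cases ha : a ∈ H <;> by_cases hb : b ∈ H <;>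
      simp [Subgroup.mul_mem_iff_of_index_two hidx, ha, hb]

theorem Subgroup.signOfIndexTwo_apply {R : Type*} [Ring R] {H : Subgroup G}
    (hidx : H.index = 2) (g : G) :
    signOfIndexTwo (R := R) hidx g = if g ∈ H then 1 else -1 := rfl

def Representation.twist {M k W : Type*} [Monoid M] [CommSemiring k] [AddCommMonoid W]
    [Module k W] (ρ : Representation k M W) (χ : M →* k) : Representation k M W where
  toFun g := χ g • ρ g
  map_one' := by simp
  map_mul' a b := by simp only [map_mul, smul_mul_smul_comm]

theorem Representation.twist_apply {M k W : Type*} [Monoid M] [CommSemiring k]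
    [AddCommMonoid W] [Module k W] (ρ : Representation k M W) (χ : M →* k) (g : M) :
    ρ.twist χ g = χ g • ρ g := rfl

namespace Representation

variable {H : Subgroup G} (π : Representation ℂ H V)

/-- Extending `π` by zero lets the relations below be stated for all `g : G`, without
membership proofs. -/
noncomputable def extendByZero (g : G) : Module.End ℂ V :=
  if hg : g ∈ H then π ⟨g, hg⟩ else 0

theorem extendByZero_of_mem {g : G} (hg : g ∈ H) : π.extendByZero g = π ⟨g, hg⟩ :=
  dif_pos hg

theorem extendByZero_of_notMem {g : G} (hg : g ∉ H) : π.extendByZero g = 0 :=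
  dif_neg hg

theorem extendByZero_one : π.extendByZero 1 = 1 := by
  rw [extendByZero_of_mem π (one_mem H)]
  exact map_one π

theorem extendByZero_mul_of_mem_left {a : G} (ha : a ∈ H) (b : G) :
    π.extendByZero (a * b) = π.extendByZero a * π.extendByZero b := by
  by_cases hb : b ∈ H
  · rw [extendByZero_of_mem π ha, extendByZero_of_mem π hb,
      extendByZero_of_mem π (mul_mem ha hb), ← map_mul]
    rfl
  · rw [extendByZero_of_notMem π hb, extendByZero_of_notMem π
      ((Subgroup.mul_mem_cancel_left H ha).not.mpr hb), mul_zero]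

theorem extendByZero_mul_of_mem_right (a : G) {b : G} (hb : b ∈ H) :
    π.extendByZero (a * b) = π.extendByZero a * π.extendByZero b := by
  by_cases ha : a ∈ H
  · exact π.extendByZero_mul_of_mem_left ha b
  · rw [extendByZero_of_notMem π ha, extendByZero_of_notMem π
      ((Subgroup.mul_mem_cancel_right H hb).not.mpr ha), zero_mul]

variable {π} {ω : G} {A : Module.End ℂ V}

theorem extendByZero_mul_of_conj
    (hA : ∀ x, A * π.extendByZero x = π.extendByZero (ω * x * ω⁻¹) * A) (x : G) :
    π.extendByZero x * A = A * π.extendByZero (ω⁻¹ * x * ω) := by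
  rw [hA]
  group

section Extension

variable (hidx : H.index = 2) (hω : ω ∉ H)
  (hA : ∀ x, A * π.extendByZero x = π.extendByZero (ω * x * ω⁻¹) * A)
  (hA2 : A * A = π.extendByZero (ω * ω))

noncomputable def extendOfIndexTwo : Representation ℂ G V where
  toFun g := if g ∈ H then π.extendByZero g else A * π.extendByZero (ω⁻¹ * g)
  map_one' := by simp [one_mem, extendByZero_one]
  map_mul' a b := by
    have hmem : ∀ g, g ∉ H → ω⁻¹ * g ∈ H := fun g hg => by
      simp [Subgroup.mul_mem_iff_of_index_two hidx, hω, hg]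
    have hmul := Subgroup.mul_mem_iff_of_index_two hidx (a := a) (b := b)
    by_cases ha : a ∈ H <;> by_cases hb : b ∈ H
    · simp only [ha, hb, mul_mem ha hb, if_true]
      exact π.extendByZero_mul_of_mem_left ha b
    · have hab : a * b ∉ H := by simp_all
      simp only [ha, hb, hab, if_true, if_false]
      have hconj : ω⁻¹ * a * ω ∈ H := (Subgroup.normal_of_index_eq_two hidx).conj_mem' a ha ω
      rw [← mul_assoc (π.extendByZero a), extendByZero_mul_of_conj hA, mul_assoc,
        ← extendByZero_mul_of_mem_left _ hconj]
      group
    · have hab : a * b ∉ H := by simp_all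
      simp only [ha, hb, hab, if_true, if_false]
      rw [mul_assoc, ← extendByZero_mul_of_mem_right _ _ hb, mul_assoc]
    · have hab : a * b ∈ H := by simp_all
      simp only [ha, hb, hab, if_true, if_false]
      symm
      calc A * π.extendByZero (ω⁻¹ * a) * (A * π.extendByZero (ω⁻¹ * b))
          = A * (π.extendByZero (ω⁻¹ * a) * A) * π.extendByZero (ω⁻¹ * b) := by
            simp only [mul_assoc]
        _ = A * A * π.extendByZero (ω⁻¹ * (ω⁻¹ * a) * ω) * π.extendByZero (ω⁻¹ * b) := by
            rw [extendByZero_mul_of_conj hA]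
            simp only [mul_assoc]
        _ = π.extendByZero (ω * ω * (ω⁻¹ * (ω⁻¹ * a) * ω) * (ω⁻¹ * b)) := by
            rw [hA2, ← extendByZero_mul_of_mem_left _ (Subgroup.mul_self_mem_of_index_two hidx ω),
              ← extendByZero_mul_of_mem_right _ _ (hmem b hb)]
        _ = π.extendByZero (a * b) := by group

theorem extendOfIndexTwo_apply_coe (h : H) : π.extendOfIndexTwo hidx hω hA hA2 h = π h := by
  simp [extendOfIndexTwo, extendByZero_of_mem π h.2]

end Extension

theorem exists_sq_eq_of_repIso_conjRep [FiniteDimensional ℂ V] (hN : H.Normal) (hπ : IsIrred π)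
    (hωω : ω * ω ∈ H) (hconj : RepIso (conjRep hN ω π) π) :
    ∃ A : Module.End ℂ V, (∀ x, A * π.extendByZero x = π.extendByZero (ω * x * ω⁻¹) * A) ∧
      A * A = π.extendByZero (ω * ω) := by
  obtain ⟨e, he⟩ := hconj
  set E : Module.End ℂ V := e.symm.toLinearMap
  have hE : ∀ x, E * π.extendByZero x = π.extendByZero (ω * x * ω⁻¹) * E := by
    intro x
    by_cases hx : x ∈ H
    · have hx' : ω * x * ω⁻¹ ∈ H := hN.conj_mem x hx ω
      have hconjRep : conjRep hN ω π ⟨x, hx⟩ = π ⟨ω * x * ω⁻¹, hx'⟩ :=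
        congrArg π (Subtype.ext (MulAut.conjNormal_apply ω ⟨x, hx⟩))
      rw [extendByZero_of_mem π hx, extendByZero_of_mem π hx']
      refine LinearMap.ext fun v => e.injective ?_
      simpa [E, hconjRep] using (he ⟨x, hx⟩ (e.symm v)).symm
    · have hx' : ω * x * ω⁻¹ ∉ H := fun h => hx (by simpa [mul_assoc] using hN.conj_mem' _ h ω)
      rw [extendByZero_of_notMem π hx, extendByZero_of_notMem π hx', mul_zero, zero_mul]
  set T := π.extendByZero (ω * ω)⁻¹ * (E * E)
  have hT : ∀ h : H, T * π h = π h * T := by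
    rintro ⟨x, hx⟩
    rw [← extendByZero_of_mem π hx]
    calc T * π.extendByZero x
        = π.extendByZero (ω * ω)⁻¹ * π.extendByZero (ω * (ω * x * ω⁻¹) * ω⁻¹) * (E * E) := by
          simp only [T, mul_assoc]
          rw [hE, ← mul_assoc E, hE]
          simp only [mul_assoc]
      _ = π.extendByZero x * T := by
          rw [← extendByZero_mul_of_mem_left _ (inv_mem hωω),
            show (ω * ω)⁻¹ * (ω * (ω * x * ω⁻¹) * ω⁻¹) = x * (ω * ω)⁻¹ by group,
            extendByZero_mul_of_mem_right _ _ (inv_mem hωω), mul_assoc]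
  obtain ⟨c, hc⟩ := hπ.exists_eq_smul_one hT
  have hEE : E * E = c • π.extendByZero (ω * ω) := by
    calc E * E = π.extendByZero (ω * ω) * T := by
          rw [← mul_assoc, ← extendByZero_mul_of_mem_left _ hωω, mul_inv_cancel,
            extendByZero_one, one_mul]
      _ = c • π.extendByZero (ω * ω) := by rw [hc, mul_smul_comm, mul_one]
  have hc0 : c ≠ 0 := by
    have := hπ.1
    rintro rfl
    rw [zero_smul] at hEE
    have hE_unit : IsUnit E := (Module.End.isUnit_iff E).mpr e.symm.bijective
    exact (hE_unit.mul hE_unit).ne_zero hEE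
  obtain ⟨μ, hμ⟩ := IsAlgClosed.exists_eq_mul_self c⁻¹
  refine ⟨μ • E, fun x => by rw [smul_mul_assoc, hE, mul_smul_comm], ?_⟩
  rw [smul_mul_smul_comm, hEE, smul_smul, ← hμ, inv_mul_cancel₀ hc0, one_smul]

theorem apply_eq_or_eq_neg_of_restrict_eq [FiniteDimensional ℂ V] (hN : H.Normal)
    (hπ : IsIrred π) (hωω : ω * ω ∈ H) {ρ₁ ρ₂ : Representation ℂ G V}
    (h₁ : ∀ h : H, ρ₁ h = π h) (h₂ : ∀ h : H, ρ₂ h = π h) : ρ₂ ω = ρ₁ ω ∨ ρ₂ ω = -ρ₁ ω := by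
  have h₁₂ : ∀ x ∈ H, ρ₁ x = ρ₂ x := fun x hx => (h₁ ⟨x, hx⟩).trans (h₂ ⟨x, hx⟩).symm
  have hC : ∀ h : H, ρ₂ ω * ρ₁ ω⁻¹ * π h = π h * (ρ₂ ω * ρ₁ ω⁻¹) := by
    rintro ⟨x, hx⟩
    have hconj : ω⁻¹ * x * ω ∈ H := hN.conj_mem' x hx ω
    calc ρ₂ ω * ρ₁ ω⁻¹ * π ⟨x, hx⟩ = ρ₂ ω * ρ₁ (ω⁻¹ * x * ω) * ρ₁ ω⁻¹ := by
          rw [← h₁, mul_assoc, ← map_mul, mul_assoc (ρ₂ ω), ← map_mul]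
          group
      _ = π ⟨x, hx⟩ * (ρ₂ ω * ρ₁ ω⁻¹) := by
          rw [h₁₂ _ hconj, ← map_mul, ← h₂ ⟨x, hx⟩, ← mul_assoc (ρ₂ _), ← map_mul ρ₂]
          group
  obtain ⟨t, ht⟩ := hπ.exists_eq_smul_one hC
  have hρω : ρ₂ ω = t • ρ₁ ω := by
    rw [← smul_one_mul, ← ht, mul_assoc, ← map_mul, inv_mul_cancel, map_one, mul_one]
  have ht2 : t * t = 1 := by
    have := hπ.1
    have hsq : ρ₂ (ω * ω) = (t * t) • ρ₁ (ω * ω) := by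
      rw [map_mul, map_mul, hρω, smul_mul_smul_comm]
    rw [← h₁₂ _ hωω, eq_comm, ← one_smul ℂ (ρ₁ (ω * ω)), smul_smul, mul_one] at hsq
    exact smul_left_injective ℂ ((Group.isUnit _).map ρ₁).ne_zero hsq
  rcases mul_self_eq_one_iff.mp ht2 with rfl | rfl
  · exact Or.inl (by rw [hρω, one_smul])
  · exact Or.inr (by rw [hρω, neg_one_smul])

end Representation

open Representation

theorem extension_of_selfconjugate_irreducible_general
    {H : Subgroup G} (hN : H.Normal) (hidx : H.index = 2)
    (ω : G) (hω : ω ∉ H) [FiniteDimensional ℂ V]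
    (π : Representation ℂ H V) (hirr : IsIrred π)
    (hconj : RepIso (conjRep hN ω π) π) :
    ∃ πp πm : Representation ℂ G V,
      (∀ h : H, πp (h : G) = π h) ∧ (∀ h : H, πm (h : G) = π h) ∧
      πp ≠ πm ∧
      (∀ ρ : Representation ℂ G V, (∀ h : H, ρ (h : G) = π h) → ρ = πp ∨ ρ = πm) ∧
      (∀ g : G, πm g = (if g ∈ H then (1 : ℂ) else -1) • πp g) ∧
      πm ω = -πp ω := by
  have := hirr.1
  have hωω : ω * ω ∈ H := Subgroup.mul_self_mem_of_index_two hidx ω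
  obtain ⟨A, hA, hA2⟩ := exists_sq_eq_of_repIso_conjRep hN hirr hωω hconj
  set πp := π.extendOfIndexTwo hidx hω hA hA2
  set πm := πp.twist (Subgroup.signOfIndexTwo hidx)
  have hp : ∀ h : H, πp h = π h := extendOfIndexTwo_apply_coe hidx hω hA hA2
  have hm : ∀ h : H, πm h = π h := fun h => by
    simp [πm, twist_apply, Subgroup.signOfIndexTwo_apply, hp]
  have hmω : πm ω = -πp ω := by
    simp [πm, twist_apply, Subgroup.signOfIndexTwo_apply, hω]
  refine ⟨πp, πm, hp, hm, fun h => πp.apply_ne_neg ω (Group.isUnit ω) ?_, fun ρ hρ => ?_,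
    fun g => rfl, hmω⟩
  · rw [← hmω, h]
  have hρH : ∀ σ : Representation ℂ G V, (∀ h : H, σ h = π h) → Set.EqOn ρ σ H :=
    fun σ hσ h hh => (hρ ⟨h, hh⟩).trans (hσ ⟨h, hh⟩).symm
  rcases apply_eq_or_eq_neg_of_restrict_eq hN hirr hωω hp hρ with hρω | hρω
  · exact Or.inl (MonoidHom.eq_of_eqOn_subgroup_of_index_two hidx hω (hρH πp hp) hρω)
  · exact Or.inr (MonoidHom.eq_of_eqOn_subgroup_of_index_two hidx hω (hρH πm hm)
      (hρω.trans hmω.symm))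

/-- Let `G` be a finite group, `H` a normal subgroup of index 2, `ω ∈ G ∖ H`,
and `π` an irreducible complex representation of `H` with `π^ω ≅ π`. Then `π` extends to `G`,
there are exactly two extensions `π₊, π₋`, and they are related by the unique nontrivial
character of `G/H`: `π₋(g) = χ(g) π₊(g)`; in particular `π₋(ω) = −π₊(ω)`. -/
theorem extension_of_selfconjugate_irreducible
    [Finite G] {H : Subgroup G} (hN : H.Normal) (hidx : H.index = 2)
    (ω : G) (hω : ω ∉ H) [FiniteDimensional ℂ V]
    (π : Representation ℂ H V) (hirr : IsIrred π)
    (hconj : RepIso (conjRep hN ω π) π) :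
    ∃ πp πm : Representation ℂ G V,
      (∀ h : H, πp (h : G) = π h) ∧ (∀ h : H, πm (h : G) = π h) ∧
      πp ≠ πm ∧
      (∀ ρ : Representation ℂ G V, (∀ h : H, ρ (h : G) = π h) → ρ = πp ∨ ρ = πm) ∧
      (∀ g : G, πm g = (if g ∈ H then (1 : ℂ) else -1) • πp g) ∧
      πm ω = -πp ω :=
  extension_of_selfconjugate_irreducible_general hN hidx ω hω π hirr hconj
end

section
/- Let G be a finite group, H a normal subgroup of index 2, and ω ∈ G ∖ H. Let (π, V) be an irreducible complex representation of H such that the conjugate representation π^ω is not isomorphic to π. Then the induced representation Ind_H^G(π) is irreducible, and its restriction to H is isomorphic to π ⊕ π^ω. -/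
variable {G : Type*} [Group G] {V : Type*} [AddCommGroup V] [Module ℂ V]

/-- The carrier of the induced representation `Ind_H^G π`: functions `f : G → V` with
`f(hg) = π(h) f(g)`. -/
def IndSpace (H : Subgroup G) (π : Representation ℂ H V) : Submodule ℂ (G → V) where
  carrier := {f | ∀ (h : H) (g : G), f ((h : G) * g) = π h (f g)}
  add_mem' := by
    intro a b ha hb h g
    simp only [Pi.add_apply, ha h g, hb h g, map_add]
  zero_mem' := by intro h g; simp
  smul_mem' := by
    intro c f hf h g
    simp only [Pi.smul_apply, hf h g, map_smul]

/-- The induced representation `Ind_H^G π`, with `G` acting by right translation. -/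
def indRep (H : Subgroup G) (π : Representation ℂ H V) :
    Representation ℂ G (IndSpace H π) where
  toFun g :=
    { toFun := fun f => ⟨fun x => (f : G → V) (x * g), by
        intro h x
        simpa [mul_assoc] using f.2 h (x * g)⟩
      map_add' := by intro a b; ext x; simp
      map_smul' := by intro c a; ext x; simp }
  map_one' := by
    apply LinearMap.ext; intro f; apply Subtype.ext; funext x; simp
  map_mul' := by
    intro a b
    apply LinearMap.ext; intro f; apply Subtype.ext; funext x
    simp [mul_assoc]

/-- The direct sum `π₁ ⊕ π₂` of two representations, on `V₁ × V₂`. -/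
def prodRep {H : Type*} [Group H] {V₁ V₂ : Type*} [AddCommGroup V₁] [Module ℂ V₁]
    [AddCommGroup V₂] [Module ℂ V₂]
    (π₁ : Representation ℂ H V₁) (π₂ : Representation ℂ H V₂) :
    Representation ℂ H (V₁ × V₂) where
  toFun h := (π₁ h).prodMap (π₂ h)
  map_one' := by simp [LinearMap.prodMap_one]
  map_mul' := by intro a b; simp [LinearMap.prodMap_mul]

/-!
Evaluation at `1` and `ω` identifies `Ind_H^G π` with `V × V`, on which `H` acts by `π ⊕ π^ω`
and `ω` by `(x, y) ↦ (y, π(ω²) x)`. As `π` and `π^ω` are irreducible and not isomorphic, an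
invariant subspace of `π ⊕ π^ω` meeting both axes trivially would be the graph of an
isomorphism, so the only invariant subspaces are `0`, `V × 0`, `0 × V` and `V × V`; the action
of `ω` swaps the two axes, which leaves only `0` and `V × V`.
-/

section Invariant

variable {Γ : Type*} [Group Γ] {V₁ V₂ : Type*} [AddCommGroup V₁] [Module ℂ V₁]
  [AddCommGroup V₂] [Module ℂ V₂] {π₁ : Representation ℂ Γ V₁} {π₂ : Representation ℂ Γ V₂}

def IsInvariantSubmodule (π : Representation ℂ Γ V₁) (U : Submodule ℂ V₁) : Prop :=
  ∀ (g : Γ) (v : V₁), v ∈ U → π g v ∈ U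

lemma IsInvariantSubmodule.map {U : Submodule ℂ V₁} (hU : IsInvariantSubmodule π₁ U)
    (f : V₁ →ₗ[ℂ] V₂) (hf : ∀ g v, f (π₁ g v) = π₂ g (f v)) :
    IsInvariantSubmodule π₂ (U.map f) := by
  rintro g _ ⟨v, hv, rfl⟩
  exact ⟨π₁ g v, hU g v hv, hf g v⟩

lemma IsInvariantSubmodule.comap {U : Submodule ℂ V₂} (hU : IsInvariantSubmodule π₂ U)
    (f : V₁ →ₗ[ℂ] V₂) (hf : ∀ g v, f (π₁ g v) = π₂ g (f v)) :
    IsInvariantSubmodule π₁ (U.comap f) := by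
  intro g v hv
  simpa only [Submodule.mem_comap, hf] using hU g (f v) hv

lemma IsIrred.eq_bot_or_eq_top (hπ : IsIrred π₁) {U : Submodule ℂ V₁}
    (hU : IsInvariantSubmodule π₁ U) : U = ⊥ ∨ U = ⊤ :=
  hπ.2 U hU

lemma IsIrred.comp_mulEquiv {Γ' : Type*} [Group Γ'] (hπ : IsIrred π₁) (φ : Γ' ≃* Γ) :
    IsIrred (π₁.comp φ.toMonoidHom) := by
  refine ⟨hπ.1, fun U hU => hπ.eq_bot_or_eq_top fun g v hv => ?_⟩
  simpa using hU (φ.symm g) v hv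

lemma IsIrred.bijective_comp_subtype (hπ₂ : IsIrred π₂) {U : Submodule ℂ V₁}
    (hU : IsInvariantSubmodule π₁ U) (hU₀ : U ≠ ⊥) (f : V₁ →ₗ[ℂ] V₂)
    (hf : ∀ g v, f (π₁ g v) = π₂ g (f v)) (hUf : Disjoint U (LinearMap.ker f)) :
    Function.Bijective (f ∘ U.subtype) := by
  refine ⟨LinearMap.injective_domRestrict_iff.mpr hUf,
    (LinearMap.range_eq_top (f := f.domRestrict U)).mp ?_⟩
  rw [LinearMap.range_domRestrict]
  exact (hπ₂.eq_bot_or_eq_top (hU.map f hf)).resolve_left fun h =>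
    hU₀ (hUf.eq_bot_of_le (LinearMap.le_ker_iff_map.mpr h))

lemma RepIso.symm (h : RepIso π₁ π₂) : RepIso π₂ π₁ := by
  obtain ⟨e, he⟩ := h
  exact ⟨e.symm, fun g v => by rw [e.symm_apply_eq, he, e.apply_symm_apply]⟩

@[simp]
lemma prodRep_apply (g : Γ) (p : V₁ × V₂) : prodRep π₁ π₂ g p = (π₁ g p.1, π₂ g p.2) :=
  rfl

lemma IsInvariantSubmodule.eq_bot_of_not_repIso (hπ₁ : IsIrred π₁)
    (hπ₂ : IsIrred π₂) (hne : ¬ RepIso π₁ π₂) {U : Submodule ℂ (V₁ × V₂)}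
    (hU : IsInvariantSubmodule (prodRep π₁ π₂) U) (hU₁ : U.comap (LinearMap.inl ℂ V₁ V₂) = ⊥)
    (hU₂ : U.comap (LinearMap.inr ℂ V₁ V₂) = ⊥) : U = ⊥ := by
  by_contra hU₀
  have hfst : Disjoint U (LinearMap.ker (LinearMap.fst ℂ V₁ V₂)) := by
    refine Submodule.disjoint_def.mpr fun p hp hp₁ => ?_
    have hp₂ : p.2 ∈ U.comap (LinearMap.inr ℂ V₁ V₂) := by
      rwa [show p = (0, p.2) from Prod.ext hp₁ rfl] at hp
    rw [hU₂, Submodule.mem_bot] at hp₂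
    exact Prod.ext hp₁ hp₂
  have hsnd : Disjoint U (LinearMap.ker (LinearMap.snd ℂ V₁ V₂)) := by
    refine Submodule.disjoint_def.mpr fun p hp hp₂ => ?_
    have hp₁ : p.1 ∈ U.comap (LinearMap.inl ℂ V₁ V₂) := by
      rwa [show p = (p.1, 0) from Prod.ext rfl hp₂] at hp
    rw [hU₁, Submodule.mem_bot] at hp₁
    exact Prod.ext hp₁ hp₂
  obtain ⟨e, he⟩ := Submodule.exists_equiv_eq_graph
    (hπ₁.bijective_comp_subtype hU hU₀ (LinearMap.fst ℂ V₁ V₂) (fun _ _ => rfl) hfst)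
    (hπ₂.bijective_comp_subtype hU hU₀ (LinearMap.snd ℂ V₁ V₂) (fun _ _ => rfl) hsnd)
  refine hne ⟨e, fun g v => ?_⟩
  have hv : (v, e v) ∈ U := he ▸ (e.toLinearMap.mem_graph_iff (v, e v)).mpr rfl
  have hgv := hU g _ hv
  rw [he, LinearMap.mem_graph_iff] at hgv
  exact hgv.symm

lemma IsInvariantSubmodule.eq_bot_or_eq_top_of_swap {V : Type*} [AddCommGroup V] [Module ℂ V]
    {π₁ π₂ : Representation ℂ Γ V} (hπ₁ : IsIrred π₁) (hπ₂ : IsIrred π₂)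
    (hne : ¬ RepIso π₁ π₂) {U : Submodule ℂ (V × V)}
    (hU : IsInvariantSubmodule (prodRep π₁ π₂) U) {T : V →ₗ[ℂ] V}
    (hT : Function.Injective T) (hUT : ∀ p ∈ U, (p.2, T p.1) ∈ U) : U = ⊥ ∨ U = ⊤ := by
  have := hπ₁.1
  have hinl : IsInvariantSubmodule π₁ (U.comap (LinearMap.inl ℂ V V)) :=
    hU.comap _ fun _ _ => by simp
  have hinr : IsInvariantSubmodule π₂ (U.comap (LinearMap.inr ℂ V V)) :=
    hU.comap _ fun _ _ => by simp
  rcases hπ₁.eq_bot_or_eq_top hinl with h₁ | h₁ <;>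
    rcases hπ₂.eq_bot_or_eq_top hinr with h₂ | h₂
  · exact Or.inl (hU.eq_bot_of_not_repIso hπ₁ hπ₂ hne h₁ h₂)
  · obtain ⟨v, hv⟩ := exists_ne (0 : V)
    have h0v : ((0 : V), v) ∈ U :=
      (h₂ ▸ Submodule.mem_top : v ∈ U.comap (LinearMap.inr ℂ V V))
    have hv0 : v ∈ U.comap (LinearMap.inl ℂ V V) := by simpa using hUT _ h0v
    exact absurd ((Submodule.mem_bot ℂ).mp (h₁ ▸ hv0)) hv
  · obtain ⟨v, hv⟩ := exists_ne (0 : V)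
    have hv0 : (v, (0 : V)) ∈ U :=
      (h₁ ▸ Submodule.mem_top : v ∈ U.comap (LinearMap.inl ℂ V V))
    have h0v : T v ∈ U.comap (LinearMap.inr ℂ V V) := by simpa using hUT _ hv0
    exact absurd (hT.eq_iff' (map_zero T) |>.mp ((Submodule.mem_bot ℂ).mp (h₂ ▸ h0v))) hv
  · refine Or.inr (eq_top_iff.mpr fun p _ => ?_)
    have hp₁ : (p.1, (0 : V)) ∈ U :=
      (h₁ ▸ Submodule.mem_top : p.1 ∈ U.comap (LinearMap.inl ℂ V V))
    have hp₂ : ((0 : V), p.2) ∈ U :=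
      (h₂ ▸ Submodule.mem_top : p.2 ∈ U.comap (LinearMap.inr ℂ V V))
    simpa using U.add_mem hp₁ hp₂

end Invariant

section IndexTwo

variable {H : Subgroup G}

lemma mul_inv_mem_of_notMem_of_index_two (hidx : H.index = 2) {ω g : G} (hω : ω ∉ H)
    (hg : g ∉ H) : g * ω⁻¹ ∈ H := by
  rw [Subgroup.mul_mem_iff_of_index_two hidx, inv_mem_iff]
  exact iff_of_false hg hω

open Classical in
noncomputable def indEquiv (hidx : H.index = 2) {ω : G} (hω : ω ∉ H)
    (π : Representation ℂ H V) : IndSpace H π ≃ₗ[ℂ] V × V where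
  toFun f := ((f : G → V) 1, (f : G → V) ω)
  map_add' _ _ := rfl
  map_smul' _ _ := rfl
  invFun p := ⟨fun g => if hg : g ∈ H then π ⟨g, hg⟩ p.1
      else π ⟨g * ω⁻¹, mul_inv_mem_of_notMem_of_index_two hidx hω hg⟩ p.2, by
    intro h g
    dsimp only
    by_cases hg : g ∈ H
    · rw [dif_pos hg, dif_pos (H.mul_mem h.2 hg), ← Module.End.mul_apply, ← map_mul]
      rfl
    · rw [dif_neg hg, dif_neg (mt (H.mul_mem_cancel_left h.2).mp hg), ← Module.End.mul_apply,
        ← map_mul]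
      congr 2
      ext
      simp [mul_assoc]⟩
  left_inv f := by
    ext g
    by_cases hg : g ∈ H
    · simpa [dif_pos hg] using (f.2 ⟨g, hg⟩ 1).symm
    · simpa [dif_neg hg] using
        (f.2 ⟨g * ω⁻¹, mul_inv_mem_of_notMem_of_index_two hidx hω hg⟩ ω).symm
  right_inv p := by
    ext <;> simp [hω, show (⟨1, H.one_mem⟩ : H) = 1 from rfl]

@[simp]
lemma indRep_apply (π : Representation ℂ H V) (g x : G) (f : IndSpace H π) :
    (indRep H π g f : G → V) x = (f : G → V) (x * g) :=
  rfl

@[simp]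
lemma indEquiv_apply (hidx : H.index = 2) {ω : G} (hω : ω ∉ H) (π : Representation ℂ H V)
    (f : IndSpace H π) : indEquiv hidx hω π f = ((f : G → V) 1, (f : G → V) ω) :=
  rfl

lemma indEquiv_indRep_of_mem (hN : H.Normal) (hidx : H.index = 2) {ω : G} (hω : ω ∉ H)
    (π : Representation ℂ H V) (h : H) (f : IndSpace H π) :
    indEquiv hidx hω π (indRep H π h f) =
      prodRep π (conjRep hN ω π) h (indEquiv hidx hω π f) := by
  refine Prod.ext ?_ ?_
  · simpa using f.2 h 1
  · simpa [conjRep] using f.2 (MulAut.conjNormal ω h) ω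

lemma indEquiv_indRep_self (hidx : H.index = 2) {ω : G} (hω : ω ∉ H)
    (π : Representation ℂ H V) (f : IndSpace H π) :
    indEquiv hidx hω π (indRep H π ω f) =
      ((indEquiv hidx hω π f).2,
        π ⟨ω * ω, Subgroup.mul_self_mem_of_index_two hidx ω⟩ (indEquiv hidx hω π f).1) := by
  refine Prod.ext ?_ ?_
  · simp
  · simpa using f.2 ⟨ω * ω, Subgroup.mul_self_mem_of_index_two hidx ω⟩ 1

end IndexTwo

theorem induced_irreducible_of_not_selfconjugate_general
    {H : Subgroup G} (hN : H.Normal) (hidx : H.index = 2)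
    (ω : G) (hω : ω ∉ H)
    (π : Representation ℂ H V) (hirr : IsIrred π)
    (hconj : ¬ RepIso (conjRep hN ω π) π) :
    IsIrred (indRep H π) ∧
      RepIso ((indRep H π).comp H.subtype) (prodRep π (conjRep hN ω π)) := by
  have := hirr.1
  set E := indEquiv hidx hω π
  have hE := indEquiv_indRep_of_mem hN hidx hω π
  refine ⟨⟨E.toEquiv.nontrivial, fun U hU => ?_⟩, ⟨E, hE⟩⟩
  set W := U.map (E : IndSpace H π →ₗ[ℂ] V × V)
  have hWH : IsInvariantSubmodule (prodRep π (conjRep hN ω π)) W :=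
    IsInvariantSubmodule.map (π₁ := (indRep H π).comp H.subtype) (fun h => hU h) _ hE
  have hWω : ∀ p ∈ W, (p.2, π ⟨ω * ω, Subgroup.mul_self_mem_of_index_two hidx ω⟩ p.1) ∈ W := by
    rintro _ ⟨f, hf, rfl⟩
    exact ⟨_, hU ω f hf, indEquiv_indRep_self hidx hω π f⟩
  rcases hWH.eq_bot_or_eq_top_of_swap hirr (hirr.comp_mulEquiv (MulAut.conjNormal ω))
      (fun h => hconj h.symm) (Function.LeftInverse.injective (π.inv_self_apply _)) hWω
    with h | h
  · exact Or.inl (Submodule.map_eq_bot_iff.mp h)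
  · exact Or.inr (Submodule.map_eq_top_iff.mp h)

/-- Let `G` be a finite group, `H` a normal subgroup of index 2, `ω ∈ G ∖ H`,
and `π` an irreducible complex representation of `H` with `π^ω ≇ π`. Then `Ind_H^G π` is
irreducible, and its restriction to `H` is isomorphic to `π ⊕ π^ω`. -/
theorem induced_irreducible_of_not_selfconjugate
    [Finite G] {H : Subgroup G} (hN : H.Normal) (hidx : H.index = 2)
    (ω : G) (hω : ω ∉ H) [FiniteDimensional ℂ V]
    (π : Representation ℂ H V) (hirr : IsIrred π)
    (hconj : ¬ RepIso (conjRep hN ω π) π) :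
    IsIrred (indRep H π) ∧
      RepIso ((indRep H π).comp H.subtype) (prodRep π (conjRep hN ω π)) :=
  induced_irreducible_of_not_selfconjugate_general hN hidx ω hω π hirr hconj
end
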